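/- arXiv:1902.00426 — 4 statements merged into one kernel-verified Lean document; each statement's English description precedes it below -/
import Mathlib

section
/- Let F be a self-similar set in ℝ for contractions f_j(x) = r_j x + b_j, j ∈ 𝒜, with F not a singleton, and let μ be any self-similar measure on F with strictly positive weights. Then there exist C > 0, α > 0 and r_0 > 0 such that μ(B(x,r)) ≤ C r^α for all x ∈ ℝ and 0 < r < r_0. -/
open MeasureTheory
open scoped ENNReal


lemma preimage_aff {a c y ρ : ℝ} (ha : 0 < a) :
    (fun x => a * x + c) ⁻¹' Metric.closedBall y ρ = Metric.closedBall ((y - c)/a) (ρ/a) := by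
  ext z
  simp only [Set.mem_preimage, Metric.mem_closedBall, Real.dist_eq]
  have h1 : a * z + c - y = (z - (y - c)/a) * a := by field_simp; ring
  rw [h1, abs_mul, abs_of_pos ha, ← le_div_iff₀ ha]

lemma unfoldmu {A : Type*} [Fintype A] {r b : A → ℝ} (p : A → ℝ)
    (μ : Measure ℝ)
    (hss : μ = ∑ j, ENNReal.ofReal (p j) • Measure.map (fun x => r j * x + b j) μ)
    {E : Set ℝ} (hE : MeasurableSet E) :
    μ E = ∑ j, ENNReal.ofReal (p j) * μ ((fun x => r j * x + b j) ⁻¹' E) := by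
  conv_lhs => rw [hss]
  rw [Measure.finset_sum_apply]
  refine Finset.sum_congr rfl fun j _ => ?_
  rw [Measure.smul_apply, Measure.map_apply (by fun_prop) hE, smul_eq_mul]

lemma keylem {A : Type*} [Fintype A] [Nonempty A] (r b p : A → ℝ)
    (hr : ∀ j, 0 < r j ∧ r j < 1)
    (F : Set ℝ) (hFc : IsCompact F)
    (μ : Measure ℝ) [IsProbabilityMeasure μ] (hμF : μ F = 1)
    (hss : μ = ∑ j, ENNReal.ofReal (p j) • Measure.map (fun x => r j * x + b j) μ)
    (rmin rmax : ℝ) (hrmin0 : 0 < rmin) (hrmin : ∀ j, rmin ≤ r j)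
    (hrmax : ∀ j, r j ≤ rmax) (hrmax1 : rmax < 1)
    (s t x : ℝ) (hs : 0 < s) (hs1 : s ≤ 1) (ht : 0 < t) (ht1 : t ≤ 1) :
    μ (Metric.closedBall x (s*t)) ≤
      (⨆ y : ℝ, μ (Metric.closedBall y (t / rmin))) *
      (⨆ y : ℝ, μ (Metric.closedBall y (s*(1+Metric.diam F)))) := by
  set D := Metric.diam F with hD
  have hD0 : 0 ≤ D := Metric.diam_nonneg
  set Mt := ⨆ y : ℝ, μ (Metric.closedBall y (t / rmin)) with hMt
  set Bs := Metric.closedBall x (s*t) with hBs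
  set Bb := Metric.closedBall x (s*(1+D)) with hBb
  have hFcompl : μ Fᶜ = 0 := by
    have := measure_compl hFc.isClosed.measurableSet (measure_ne_top μ F)
    rw [hμF, measure_univ] at this
    simp [this]
  -- base case of the induction
  have base : ∀ aa cc : ℝ, 0 < aa → s * rmin < aa → aa ≤ s →
      μ ((fun y => aa * y + cc) ⁻¹' Bs) ≤ Mt * μ ((fun y => aa * y + cc) ⁻¹' Bb) := by
    intro aa cc h0 h1 h2
    by_cases hint : ∃ z ∈ F, aa * z + cc ∈ Bs
    · obtain ⟨z, hzF, hz⟩ := hint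
      -- F is contained in the preimage of the big ball
      have hFsub : F ⊆ (fun y => aa * y + cc) ⁻¹' Bb := by
        intro y hyF
        simp only [Set.mem_preimage, hBb, Metric.mem_closedBall]
        have hdzy : dist y z ≤ D := Metric.dist_le_diam_of_mem hFc.isBounded hyF hzF
        have hzx : dist (aa * z + cc) x ≤ s * t := Metric.mem_closedBall.mp hz
        calc dist (aa * y + cc) x ≤ dist (aa * y + cc) (aa * z + cc) + dist (aa * z + cc) x :=
              dist_triangle _ _ _
        _ ≤ aa * D + s * t := by
            refine add_le_add ?_ hzx
            rw [Real.dist_eq]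
            have : aa * y + cc - (aa * z + cc) = aa * (y - z) := by ring
            rw [this, abs_mul, abs_of_pos h0]
            have hdzy' : |y - z| ≤ D := by rwa [Real.dist_eq] at hdzy
            exact mul_le_mul_of_nonneg_left hdzy' h0.le
        _ ≤ s * D + s * t := by nlinarith
        _ ≤ s * (1 + D) := by nlinarith
      have hBb1 : μ ((fun y => aa * y + cc) ⁻¹' Bb) = 1 :=
        le_antisymm prob_le_one (le_trans hμF.ge (measure_mono hFsub))
      rw [hBb1, mul_one]
      -- the preimage of the small ball is a ball of radius ≤ t/rmin
      rw [hBs, preimage_aff h0]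
      refine le_trans (measure_mono (Metric.closedBall_subset_closedBall (ε₂ := t / rmin) ?_)) ?_
      · show s * t / aa ≤ t / rmin
        have h3 : s * t / aa ≤ s * t / (s * rmin) := by
          apply div_le_div_of_nonneg_left (by positivity) (by positivity) h1.le
        have h4 : s * t / (s * rmin) = t / rmin :=
          mul_div_mul_left _ _ (ne_of_gt hs)
        linarith
      · exact le_iSup (fun y => μ (Metric.closedBall y (t / rmin))) _
    · push_neg at hint
      have hsub : (fun y => aa * y + cc) ⁻¹' Bs ⊆ Fᶜ := by
        intro y hy
        exact fun hyF => hint y hyF hy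
      have h0' : μ ((fun y => aa * y + cc) ⁻¹' Bs) = 0 :=
        le_antisymm (le_trans (measure_mono hsub) hFcompl.le) zero_le
      rw [h0']
      exact zero_le
  -- main induction
  have main : ∀ n : ℕ, ∀ aa cc : ℝ, 0 < aa → s * rmin < aa → aa * rmax ^ n ≤ s →
      μ ((fun y => aa * y + cc) ⁻¹' Bs) ≤ Mt * μ ((fun y => aa * y + cc) ⁻¹' Bb) := by
    intro n
    induction n with
    | zero =>
      intro aa cc h0 h1 h2
      rw [pow_zero, mul_one] at h2
      exact base aa cc h0 h1 h2
    | succ n ih =>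
      intro aa cc h0 h1 h2
      by_cases hc : aa ≤ s
      · exact base aa cc h0 h1 hc
      push_neg at hc
      have hcomp : ∀ (j : A) (E : Set ℝ),
          (fun y => r j * y + b j) ⁻¹' ((fun y => aa * y + cc) ⁻¹' E) =
          (fun y => (aa * r j) * y + (aa * b j + cc)) ⁻¹' E := by
        intro j E
        ext w
        simp only [Set.mem_preimage]
        rw [show aa * (r j * w + b j) + cc = (aa * r j) * w + (aa * b j + cc) from by ring]
      have hmeasBs : MeasurableSet ((fun y => aa * y + cc) ⁻¹' Bs) :=
        (Metric.isClosed_closedBall.preimage (by fun_prop)).measurableSet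
      have hmeasBb : MeasurableSet ((fun y => aa * y + cc) ⁻¹' Bb) :=
        (Metric.isClosed_closedBall.preimage (by fun_prop)).measurableSet
      rw [unfoldmu p μ hss hmeasBs, unfoldmu p μ hss hmeasBb, Finset.mul_sum]
      refine Finset.sum_le_sum fun j _ => ?_
      rw [hcomp j Bs, hcomp j Bb, ← mul_assoc, mul_comm Mt (ENNReal.ofReal (p j)), mul_assoc]
      refine mul_le_mul_right ?_ _
      refine ih (aa * r j) (aa * b j + cc) (mul_pos h0 (hr j).1) ?_ ?_
      · calc s * rmin ≤ s * r j := by nlinarith [hrmin j, (hr j).1]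
        _ < aa * r j := by nlinarith [(hr j).1]
      · calc aa * r j * rmax ^ n ≤ aa * rmax * rmax ^ n := by
              have h6 : (0:ℝ) < rmax := lt_of_lt_of_le (hr j).1 (hrmax j)
              have h5 : (0:ℝ) ≤ rmax ^ n := le_of_lt (pow_pos h6 n)
              nlinarith [mul_nonneg (mul_nonneg h0.le h5) (sub_nonneg.mpr (hrmax j))]
        _ = aa * rmax ^ (n+1) := by ring
        _ ≤ s := h2
  -- apply with the identity map
  obtain ⟨n, hn⟩ := exists_pow_lt_of_lt_one hs hrmax1
  obtain ⟨j0⟩ := (inferInstance : Nonempty A)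
  have h1 : (1:ℝ) * rmax ^ n ≤ s := by rw [one_mul]; exact hn.le
  have h2 : s * rmin < 1 := by nlinarith [hrmin j0, (hr j0).2, hrmin0]
  have := main n 1 0 one_pos h2 h1
  simp only [one_mul, add_zero] at this
  have hid : (fun y : ℝ => y) ⁻¹' Bs = Bs := rfl
  calc μ Bs ≤ Mt * μ Bb := this
  _ ≤ Mt * ⨆ y : ℝ, μ (Metric.closedBall y (s*(1+D))) :=
      mul_le_mul_right (le_iSup (fun y => μ (Metric.closedBall y (s*(1+D)))) x) _

lemma step1 {A : Type*} [Fintype A] [Nonempty A] (r b p : A → ℝ)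
    (hr : ∀ j, 0 < r j ∧ r j < 1) (hp : ∀ j, 0 < p j ∧ p j < 1)
    (hpsum : ∑ j, p j = 1)
    (F : Set ℝ) (hFc : IsCompact F) (hFne : F.Nonempty)
    (hFss : F = ⋃ j, (fun x => r j * x + b j) '' F)
    (hFns : ¬ ∃ x, F = {x})
    (μ : Measure ℝ) [IsProbabilityMeasure μ] (hμF : μ F = 1)
    (hss : μ = ∑ j, ENNReal.ofReal (p j) • Measure.map (fun x => r j * x + b j) μ) :
    ∃ t₀ : ℝ, 0 < t₀ ∧ t₀ ≤ 1 ∧ (⨆ x : ℝ, μ (Metric.closedBall x t₀)) < 1 := by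
  classical
  by_contra hcon
  push_neg at hcon
  have hFcompl : μ Fᶜ = 0 := by
    have := measure_compl hFc.isClosed.measurableSet (measure_ne_top μ F)
    rw [hμF, measure_univ] at this
    simp [this]
  -- choose points
  have hxs : ∀ n : ℕ, ∃ x : ℝ, ENNReal.ofReal (1 - 1/(n+2)) < μ (Metric.closedBall x (1/(n+2))) := by
    intro n
    have ht : (0:ℝ) < 1/(n+2) := by positivity
    have h1 : (1:ℝ≥0∞) ≤ (⨆ x : ℝ, μ (Metric.closedBall x (1/(n+2)))) := by
      refine hcon _ ht ?_
      rw [div_le_one (by positivity)]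
      linarith [Nat.cast_nonneg (α := ℝ) n]
    have h2 : ENNReal.ofReal (1 - 1/(n+2)) < 1 := by
      rw [ENNReal.ofReal_lt_one]; linarith
    exact lt_iSup_iff.mp (lt_of_lt_of_le h2 h1)
  choose xs hxsp using hxs
  -- the points are near F
  have hmem : ∀ n, xs n ∈ Metric.cthickening 1 F := by
    intro n
    have hhalf : (1:ℝ)/(n+2) ≤ 1/2 := by
      rw [div_le_div_iff₀ (by positivity) (by norm_num)]
      linarith [Nat.cast_nonneg (α := ℝ) n]
    have hpos : (0:ℝ≥0∞) < μ (Metric.closedBall (xs n) (1/(n+2))) := by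
      refine lt_trans ?_ (hxsp n)
      exact ENNReal.ofReal_pos.mpr (by linarith)
    have hne : (Metric.closedBall (xs n) (1/(n+2)) ∩ F).Nonempty := by
      by_contra hemp
      rw [Set.not_nonempty_iff_eq_empty] at hemp
      have : Metric.closedBall (xs n) (1/(n+2)) ⊆ Fᶜ := by
        intro y hy
        by_contra hyF
        exact Set.eq_empty_iff_forall_notMem.mp hemp y ⟨hy, not_not.mp hyF⟩
      exact absurd (le_antisymm (le_trans (measure_mono this) hFcompl.le) zero_le) (ne_of_gt hpos)
    obtain ⟨z, hz1, hz2⟩ := hne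
    refine Metric.mem_cthickening_of_dist_le (xs n) z 1 F hz2 ?_
    calc dist (xs n) z ≤ 1/(n+2) := Metric.mem_closedBall'.mp hz1
    _ ≤ 1 := by rw [div_le_one (by positivity)]; linarith [Nat.cast_nonneg (α := ℝ) n]
  obtain ⟨a, -, φ, hφ, hlim⟩ := (hFc.cthickening (r := 1)).tendsto_subseq hmem
  -- the sequence 1/(φ k + 2) tends to 0
  have hu : Filter.Tendsto (fun k : ℕ => (1:ℝ)/(φ k + 2)) Filter.atTop (nhds 0) := by
    apply squeeze_zero (fun k => by positivity) (g := fun k : ℕ => (1:ℝ)/(k+1))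
    · intro k
      rw [div_le_div_iff₀ (by positivity) (by positivity)]
      have hk : k ≤ φ k := hφ.le_apply
      have : (k:ℝ) ≤ (φ k : ℝ) := by exact_mod_cast hk
      linarith
    · exact tendsto_one_div_add_atTop_nhds_zero_nat
  -- every closed ball around a has measure 1
  have hball : ∀ ε : ℝ, 0 < ε → μ (Metric.closedBall a ε) = 1 := by
    intro ε hε
    refine le_antisymm prob_le_one ?_
    by_contra hlt
    push_neg at hlt
    set m := μ (Metric.closedBall a ε) with hm
    have hmne : m ≠ ⊤ := (measure_ne_top μ _)
    have hmlt : m.toReal < 1 := by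
      rw [← ENNReal.toReal_one]
      exact ENNReal.toReal_strict_mono ENNReal.one_ne_top hlt
    have hev1 : ∀ᶠ k in Filter.atTop, (1:ℝ)/(φ k + 2) < ε/2 :=
      hu.eventually (gt_mem_nhds (by positivity))
    have hev2 : ∀ᶠ k in Filter.atTop, (1:ℝ)/(φ k + 2) < 1 - m.toReal :=
      hu.eventually (gt_mem_nhds (by linarith))
    have hev3 : ∀ᶠ k in Filter.atTop, dist ((xs ∘ φ) k) a < ε/2 := by
      obtain ⟨N, hN⟩ := Metric.tendsto_atTop.mp hlim (ε/2) (by positivity)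
      exact Filter.eventually_atTop.mpr ⟨N, hN⟩
    obtain ⟨k, ⟨h1, h2⟩, h3⟩ := ((hev1.and hev2).and hev3).exists
    have hsub : Metric.closedBall (xs (φ k)) (1/(φ k + 2)) ⊆ Metric.closedBall a ε := by
      apply Metric.closedBall_subset_closedBall'
      have : dist (xs (φ k)) a < ε/2 := h3
      linarith
    have : ENNReal.ofReal (1 - 1/(φ k + 2)) < m := lt_of_lt_of_le (hxsp (φ k)) (measure_mono hsub)
    rw [ENNReal.ofReal_lt_iff_lt_toReal (by linarith [ENNReal.toReal_nonneg (a := m)]) hmne] at this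
    linarith
  -- hence μ {a} = 1
  have ha1 : μ {a} = 1 := by
    have hiInter : (⋂ n : ℕ, Metric.closedBall a (1/(n+1))) = {a} := by
      ext y
      simp only [Set.mem_iInter, Metric.mem_closedBall, Set.mem_singleton_iff]
      constructor
      · intro h
        have hd : dist y a ≤ 0 :=
          ge_of_tendsto tendsto_one_div_add_atTop_nhds_zero_nat (Filter.Eventually.of_forall h)
        have := dist_nonneg (x := y) (y := a)
        rw [← dist_eq_zero (x := y) (y := a)]
        linarith
      · intro h
        subst h
        intro n
        simp only [dist_self]
        positivity
    have htend := tendsto_measure_iInter_atTop (μ := μ)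
      (s := fun n : ℕ => Metric.closedBall a (1/(n+1)))
      (fun n => Metric.isClosed_closedBall.measurableSet.nullMeasurableSet)
      (fun i j hij => Metric.closedBall_subset_closedBall (by
        rw [div_le_div_iff₀ (by positivity) (by positivity)]
        have : (i:ℝ) ≤ j := by exact_mod_cast hij
        linarith)) ⟨0, measure_ne_top μ _⟩
    rw [hiInter] at htend
    have hconst : ∀ n : ℕ, μ (Metric.closedBall a (1/(n+1))) = 1 := fun n => hball _ (by positivity)
    have : Filter.Tendsto (fun _ : ℕ => (1:ℝ≥0∞)) Filter.atTop (nhds (μ {a})) := by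
      refine htend.congr fun n => ?_
      exact (hconst n)
    exact tendsto_nhds_unique this tendsto_const_nhds
  -- a is a common fixed point
  have hacompl : μ {a}ᶜ = 0 := by
    have := measure_compl (measurableSet_singleton a) (measure_ne_top μ {a})
    rw [ha1, measure_univ] at this
    simp [this]
  have hfix : ∀ j, r j * a + b j = a := by
    by_contra hcon2
    push_neg at hcon2
    obtain ⟨j₀, hj₀⟩ := hcon2
    have hpre : ∀ j, (fun x => r j * x + b j) ⁻¹' ({a} : Set ℝ) = {(a - b j)/(r j)} := by
      intro j
      ext z
      simp only [Set.mem_preimage, Set.mem_singleton_iff]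
      rw [eq_div_iff (ne_of_gt (hr j).1)]
      constructor <;> intro h <;> linarith [(hr j).1]
    have hsum := unfoldmu p μ hss (measurableSet_singleton a)
    rw [ha1] at hsum
    have hj₀0 : μ ((fun x => r j₀ * x + b j₀) ⁻¹' ({a} : Set ℝ)) = 0 := by
      rw [hpre j₀]
      refine le_antisymm (le_trans (measure_mono ?_) hacompl.le) zero_le
      intro z hz
      simp only [Set.mem_singleton_iff] at hz
      subst hz
      simp only [Set.mem_compl_iff, Set.mem_singleton_iff]
      intro heq
      rw [div_eq_iff (ne_of_gt (hr j₀).1)] at heq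
      exact hj₀ (by linarith)
    rw [← Finset.add_sum_erase _ _ (Finset.mem_univ j₀), hj₀0, mul_zero, zero_add] at hsum
    have hle : ∑ j ∈ Finset.univ.erase j₀, ENNReal.ofReal (p j) * μ ((fun x => r j * x + b j) ⁻¹' ({a} : Set ℝ))
        ≤ ENNReal.ofReal (1 - p j₀) := by
      calc ∑ j ∈ Finset.univ.erase j₀, ENNReal.ofReal (p j) * μ ((fun x => r j * x + b j) ⁻¹' ({a} : Set ℝ))
          ≤ ∑ j ∈ Finset.univ.erase j₀, ENNReal.ofReal (p j) * 1 := by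
            refine Finset.sum_le_sum fun j _ => ?_
            exact mul_le_mul_right prob_le_one _
      _ = ∑ j ∈ Finset.univ.erase j₀, ENNReal.ofReal (p j) := by simp
      _ = ENNReal.ofReal (∑ j ∈ Finset.univ.erase j₀, p j) :=
            (ENNReal.ofReal_sum_of_nonneg (fun j _ => (hp j).1.le)).symm
      _ = ENNReal.ofReal (1 - p j₀) := by
            rw [Finset.sum_erase_eq_sub (Finset.mem_univ j₀), hpsum]
    rw [← hsum] at hle
    have : ENNReal.ofReal (1 - p j₀) < 1 := ENNReal.ofReal_lt_one.mpr (by linarith [(hp j₀).1])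
    exact absurd hle (not_le.mpr this)
  -- maximum distance argument: F = {a}
  obtain ⟨y₀, hy₀F, hmax⟩ := hFc.exists_isMaxOn hFne
    ((continuous_abs.comp (continuous_id.sub continuous_const)).continuousOn (s := F))
  have hy₀' : y₀ ∈ ⋃ j, (fun x => r j * x + b j) '' F := hFss ▸ hy₀F
  simp only [Set.mem_iUnion, Set.mem_image] at hy₀'
  obtain ⟨j, z, hzF, hy₀eq⟩ := hy₀'
  have hzle : |z - a| ≤ |y₀ - a| := hmax hzF
  have hy₀a : |y₀ - a| = r j * |z - a| := by
    rw [← hy₀eq]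
    have : r j * z + b j - a = r j * (z - a) := by
      have := hfix j; linarith
    rw [this, abs_mul, abs_of_pos (hr j).1]
  rcases eq_or_lt_of_le (abs_nonneg (y₀ - a)) with h0 | h0
  · -- F = {a}
    apply hFns
    refine ⟨a, Set.eq_singleton_iff_nonempty_unique_mem.mpr ⟨hFne, fun y hyF => ?_⟩⟩
    have hy : |y - a| ≤ |y₀ - a| := hmax hyF
    rw [← h0] at hy
    have : |y - a| = 0 := le_antisymm hy (abs_nonneg _)
    rw [abs_eq_zero] at this
    linarith
  · have h1 : r j * |z - a| ≤ r j * |y₀ - a| := mul_le_mul_of_nonneg_left hzle (hr j).1.le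
    nlinarith [(hr j).2]

/-- if `F` is a non-singleton self-similar set for the similitudes
`f_j(x) = r_j x + b_j` and `μ` is a self-similar measure with strictly positive
weights, then `μ` is Hölder regular: there exist `C, α, r₀ > 0` with
`μ(B(x,ρ)) ≤ C ρ^α` for all `x` and `0 < ρ < r₀`. -/

theorem stmt6 {A : Type*} [Fintype A] [Nonempty A] (r b p : A → ℝ)
    (hr : ∀ j, 0 < r j ∧ r j < 1) (hp : ∀ j, 0 < p j ∧ p j < 1)
    (hpsum : ∑ j, p j = 1)
    (F : Set ℝ) (hFc : IsCompact F) (hFne : F.Nonempty)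
    (hFss : F = ⋃ j, (fun x => r j * x + b j) '' F)
    (hFns : ¬ ∃ x, F = {x})
    (μ : Measure ℝ) [IsProbabilityMeasure μ] (hμF : μ F = 1)
    (hss : μ = ∑ j, ENNReal.ofReal (p j) • Measure.map (fun x => r j * x + b j) μ) :
    ∃ C > 0, ∃ α > 0, ∃ r0 > 0, ∀ x : ℝ, ∀ ρ : ℝ, 0 < ρ → ρ < r0 →
      μ (Metric.closedBall x ρ) ≤ ENNReal.ofReal (C * ρ ^ (α : ℝ)) := by
  classical
  have hne : (Finset.univ : Finset A).Nonempty := Finset.univ_nonempty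
  set rmin := Finset.univ.inf' hne r with hrmindef
  set rmax := Finset.univ.sup' hne r with hrmaxdef
  obtain ⟨jm, -, hjm⟩ := Finset.exists_mem_eq_inf' hne r
  obtain ⟨jM, -, hjM⟩ := Finset.exists_mem_eq_sup' hne r
  have hrmin : ∀ j, rmin ≤ r j := fun j => Finset.inf'_le r (Finset.mem_univ j)
  have hrmax : ∀ j, r j ≤ rmax := fun j => Finset.le_sup' r (Finset.mem_univ j)
  have hrmin0 : 0 < rmin := by rw [hrmindef, hjm]; exact (hr jm).1
  have hrmax1 : rmax < 1 := by rw [hrmaxdef, hjM]; exact (hr jM).2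
  have hrmin1 : rmin < 1 := lt_of_le_of_lt (hrmin jm) (hr jm).2
  set Mfun : ℝ → ℝ≥0∞ := fun u => ⨆ y : ℝ, μ (Metric.closedBall y u) with hMfun
  have hMmono : ∀ u v : ℝ, u ≤ v → Mfun u ≤ Mfun v := fun u v huv =>
    iSup_mono fun y => measure_mono (Metric.closedBall_subset_closedBall huv)
  have hMle1 : ∀ u : ℝ, Mfun u ≤ 1 := fun u => iSup_le fun y => prob_le_one
  obtain ⟨t₀, ht₀0, ht₀1, hMt₀⟩ := step1 r b p hr hp hpsum F hFc hFne hFss hFns μ hμF hss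
  set D := Metric.diam F with hDdef
  have hD0 : 0 ≤ D := Metric.diam_nonneg
  set c := max ((Mfun t₀).toReal) (1/2) with hcdef
  have hc0 : (0:ℝ) < c := lt_of_lt_of_le (by norm_num) (le_max_right _ _)
  have hMt₀ne : Mfun t₀ ≠ ⊤ := ne_top_of_le_ne_top ENNReal.one_ne_top (hMle1 t₀)
  have hc1 : c < 1 := by
    apply max_lt _ (by norm_num)
    rw [← ENNReal.toReal_one]
    exact ENNReal.toReal_strict_mono ENNReal.one_ne_top hMt₀
  have hcM : Mfun t₀ ≤ ENNReal.ofReal c := by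
    rw [← ENNReal.ofReal_toReal hMt₀ne]
    exact ENNReal.ofReal_le_ofReal (le_max_left _ _)
  set s₁ := t₀ / (1 + D) with hs₁def
  have hs₁0 : 0 < s₁ := div_pos ht₀0 (by linarith)
  have hs₁1 : s₁ ≤ 1 := by rw [div_le_one (by linarith)]; linarith
  have hs₁D : s₁ * (1 + D) = t₀ := div_mul_cancel₀ _ (by linarith)
  set q := s₁ * rmin with hqdef
  have hq0 : 0 < q := mul_pos hs₁0 hrmin0
  have hq1 : q < 1 := by nlinarith
  have hkey : ∀ t : ℝ, 0 < t → t ≤ 1 → Mfun (s₁ * t) ≤ Mfun (t / rmin) * ENNReal.ofReal c := by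
    intro t ht ht1'
    refine iSup_le fun x => ?_
    calc μ (Metric.closedBall x (s₁ * t))
        ≤ Mfun (t / rmin) * Mfun (s₁ * (1 + D)) :=
          keylem r b p hr F hFc μ hμF hss rmin rmax hrmin0 hrmin hrmax hrmax1 s₁ t x hs₁0 hs₁1 ht ht1'
    _ ≤ Mfun (t / rmin) * ENNReal.ofReal c := mul_le_mul_right (hs₁D ▸ hcM) _
  have claim : ∀ k : ℕ, Mfun (q^k * t₀) ≤ ENNReal.ofReal c ^ (k/2 + 1) := by
    intro k
    induction k using Nat.strong_induction_on with
    | _ k ih =>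
      rcases k with _ | k
      · simpa using hcM
      rcases k with _ | k
      · have h1 : q * t₀ ≤ t₀ := by nlinarith
        norm_num
        exact le_trans (hMmono _ _ h1) hcM
      · -- k+2 case
        have hqk1 : (0:ℝ) < q^(k+1) := pow_pos hq0 _
        have hq1le : q^(k+1) ≤ 1 := pow_le_one₀ hq0.le hq1.le
        have htpos : (0:ℝ) < rmin * (q^(k+1) * t₀) := by positivity
        have hqt1 : q^(k+1) * t₀ ≤ 1 := by nlinarith [mul_le_mul hq1le ht₀1 ht₀0.le zero_le_one]
        have htle1 : rmin * (q^(k+1) * t₀) ≤ 1 := by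
          nlinarith [mul_le_mul hrmin1.le hqt1 (by positivity : (0:ℝ) ≤ q^(k+1) * t₀) zero_le_one]
        have hstep := hkey (rmin * (q^(k+1) * t₀)) htpos htle1
        have hrad : s₁ * (rmin * (q^(k+1) * t₀)) = q^(k+2) * t₀ := by
          rw [hqdef]; ring
        have hdiv : (rmin * (q^(k+1) * t₀)) / rmin = q^(k+1) * t₀ :=
          mul_div_cancel_left₀ _ (ne_of_gt hrmin0)
        rw [hrad, hdiv] at hstep
        have hmono1 : Mfun (q^(k+1) * t₀) ≤ Mfun (q^k * t₀) := by
          apply hMmono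
          have : q^(k+1) ≤ q^k := pow_le_pow_of_le_one hq0.le hq1.le (Nat.le_succ k)
          nlinarith
        have hih := ih k (by omega)
        calc Mfun (q^(k+2) * t₀) ≤ Mfun (q^(k+1) * t₀) * ENNReal.ofReal c := hstep
        _ ≤ Mfun (q^k * t₀) * ENNReal.ofReal c := mul_le_mul_left hmono1 _
        _ ≤ ENNReal.ofReal c ^ (k/2 + 1) * ENNReal.ofReal c := mul_le_mul_left hih _
        _ = ENNReal.ofReal c ^ (k/2 + 2) := by ring
        _ = ENNReal.ofReal c ^ ((k+2)/2 + 1) := by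
              congr 1
              omega
  set α := Real.log c / (2 * Real.log q) with hαdef
  have hlogc : Real.log c < 0 := Real.log_neg hc0 hc1
  have hlogq : Real.log q < 0 := Real.log_neg hq0 hq1
  have hα0 : 0 < α := div_pos_iff.mpr (Or.inr ⟨hlogc, by linarith⟩)
  refine ⟨(q*t₀)^(-α), Real.rpow_pos_of_pos (by positivity) _, α, hα0, q*t₀, by positivity, ?_⟩
  intro x ρ hρ0 hρr0
  have hex : ∃ n : ℕ, q^n * t₀ < ρ := by
    obtain ⟨n, hn⟩ := exists_pow_lt_of_lt_one (div_pos hρ0 ht₀0) hq1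
    exact ⟨n, (lt_div_iff₀ ht₀0).mp hn⟩
  have hk : q^(Nat.find hex) * t₀ < ρ := Nat.find_spec hex
  have hk0 : Nat.find hex ≠ 0 := by
    intro h
    rw [h, pow_zero, one_mul] at hk
    nlinarith
  obtain ⟨m, hm⟩ : ∃ m, Nat.find hex = m + 1 :=
    ⟨Nat.find hex - 1, (Nat.succ_pred_eq_of_pos (Nat.pos_of_ne_zero hk0)).symm⟩
  have hmlt : ¬ (q^m * t₀ < ρ) := Nat.find_min hex (by omega)
  push_neg at hmlt
  have hqm1 : q^(m+1) * t₀ < ρ := by rw [← hm]; exact hk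
  have h1 : μ (Metric.closedBall x ρ) ≤ ENNReal.ofReal c ^ (m/2 + 1) :=
    le_trans (le_trans (le_iSup (fun y => μ (Metric.closedBall y ρ)) x) (hMmono _ _ hmlt)) (claim m)
  rw [← ENNReal.ofReal_pow hc0.le] at h1
  refine le_trans h1 (ENNReal.ofReal_le_ofReal ?_)
  -- real inequality
  have e1 : c ^ (m/2 + 1 : ℕ) ≤ c ^ ((m:ℝ)/2) := by
    rw [← Real.rpow_natCast c (m/2 + 1)]
    apply Real.rpow_le_rpow_of_exponent_ge hc0 hc1.le
    have h2 : 2*(m/2) + m % 2 = m := Nat.div_add_mod m 2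
    have h3 : m % 2 ≤ 1 := Nat.le_of_lt_succ (Nat.mod_lt m (by norm_num))
    have h4 : (m:ℝ) ≤ 2*((m/2 : ℕ):ℝ) + 1 := by exact_mod_cast by omega
    push_cast
    linarith
  have e2 : c ^ ((m:ℝ)/2) = (q^m : ℝ) ^ α := by
    rw [Real.rpow_def_of_pos hc0, Real.rpow_def_of_pos (pow_pos hq0 m), Real.log_pow]
    congr 1
    have hQ : Real.log q ≠ 0 := ne_of_lt hlogq
    rw [hαdef]
    field_simp
  have e3 : (q^m : ℝ) ^ α < (ρ / (q*t₀)) ^ α := by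
    apply Real.rpow_lt_rpow (pow_nonneg hq0.le m) _ hα0
    rw [lt_div_iff₀ (by positivity)]
    calc q^m * (q * t₀) = q^(m+1) * t₀ := by ring
    _ < ρ := hqm1
  have e4 : (ρ / (q*t₀)) ^ α = (q*t₀)^(-α) * ρ^α := by
    rw [Real.div_rpow hρ0.le (by positivity), Real.rpow_neg (by positivity),
      div_eq_mul_inv, mul_comm]
  calc c ^ (m/2 + 1 : ℕ) ≤ c ^ ((m:ℝ)/2) := e1
  _ = (q^m : ℝ) ^ α := e2
  _ ≤ (ρ / (q*t₀)) ^ α := e3.le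
  _ = (q*t₀)^(-α) * ρ^α := e4
end

section
/- Let λ be a finitely supported, non-lattice probability measure on (0,∞) with mean σ = ∫ x dλ(x). Then the function u(z) = 1/(1 − ℒλ(z)) − 1/(σz) extends to a holomorphic function on a neighborhood of the closed half-plane {z ∈ ℂ : Re z ≥ 0}. -/
open MeasureTheory

/-- for a finitely supported non-lattice probability measure
`λ = Σ_j p_j δ_{x_j}` on `(0,∞)` with mean `σ`, the function
`u(z) = 1/(1 − ℒλ(z)) − 1/(σz)` extends to a holomorphic function on an open
neighbourhood of the closed half-plane `{Re z ≥ 0}`, where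
`ℒλ(z) = Σ_j p_j e^{-z x_j}`. -/
theorem stmt8 {A : Type*} [Fintype A] (x p : A → ℝ)
    (hx : ∀ j, 0 < x j) (hp : ∀ j, 0 < p j) (hpsum : ∑ j, p j = 1)
    (hnl : Dense ((AddSubgroup.closure (Set.range x) : AddSubgroup ℝ) : Set ℝ))
    (σ : ℝ) (hσ : σ = ∑ j, p j * x j) :
    ∃ (U : Set ℂ) (v : ℂ → ℂ), IsOpen U ∧ {z : ℂ | 0 ≤ z.re} ⊆ U ∧
      DifferentiableOn ℂ v U ∧
      ∀ z : ℂ, 0 < z.re →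
        v z = 1 / (1 - ∑ j, (p j : ℂ) * Complex.exp (-z * x j)) - 1 / (σ * z) := by
  classical
  have hA : (Finset.univ : Finset A).Nonempty := by
    by_contra h
    rw [Finset.not_nonempty_iff_eq_empty] at h
    rw [h] at hpsum; simp at hpsum
  have hσpos : 0 < σ := by
    rw [hσ]; exact Finset.sum_pos (fun j _ => mul_pos (hp j) (hx j)) hA
  have hσ0 : (σ : ℂ) ≠ 0 := by exact_mod_cast hσpos.ne'
  set f : ℂ → ℂ := fun z => 1 - ∑ j, (p j : ℂ) * Complex.exp (-z * x j) with hfdef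
  have hfd : Differentiable ℂ f := by
    apply Differentiable.const_sub
    apply Differentiable.fun_sum
    intro j _
    exact ((differentiable_id.neg.mul_const _).cexp).const_mul _
  have hf0 : f 0 = 0 := by
    simp only [hfdef, neg_zero, zero_mul, Complex.exp_zero, mul_one]
    rw [← Complex.ofReal_sum, hpsum]
    simp
  have hderiv : HasDerivAt f (σ : ℂ) 0 := by
    have h1 : ∀ j : A, HasDerivAt (fun z : ℂ => (p j : ℂ) * Complex.exp (-z * x j))
        (-((p j : ℂ) * (x j : ℂ))) 0 := by
      intro j
      have h2 : HasDerivAt (fun z : ℂ => -z * (x j : ℂ)) (-(x j : ℂ)) 0 := by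
        simpa using ((hasDerivAt_id (0 : ℂ)).neg.mul_const (x j : ℂ))
      have h3 := h2.cexp
      have h4 := h3.const_mul (p j : ℂ)
      simpa [mul_comm] using h4
    have h4 := HasDerivAt.fun_sum (fun j (_ : j ∈ Finset.univ) => h1 j)
    have h5 := (hasDerivAt_const (0 : ℂ) (1 : ℂ)).fun_sub h4
    refine h5.congr_deriv ?_
    rw [hσ]
    push_cast
    simp
  set g : ℂ → ℂ := dslope f 0 with hgdef
  have hgd : Differentiable ℂ g := by
    rw [← differentiableOn_univ, hgdef,
      Complex.differentiableOn_dslope Filter.univ_mem]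
    exact hfd.differentiableOn
  have hg0 : g 0 = (σ : ℂ) := by rw [hgdef, dslope_same]; exact hderiv.deriv
  have hfg : ∀ z : ℂ, f z = z * g z := by
    intro z
    have h := sub_smul_dslope f 0 z
    rw [hf0, sub_zero, sub_zero, smul_eq_mul] at h
    exact h.symm
  set w : ℂ → ℂ := dslope g 0 with hwdef
  have hwd : Differentiable ℂ w := by
    rw [← differentiableOn_univ, hwdef,
      Complex.differentiableOn_dslope Filter.univ_mem]
    exact hgd.differentiableOn
  have hgw : ∀ z : ℂ, g z - (σ : ℂ) = z * w z := by
    intro z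
    have h := sub_smul_dslope g 0 z
    rw [hg0, sub_zero, smul_eq_mul] at h
    exact h.symm
  -- f does not vanish on the closed half plane away from 0
  have hfne : ∀ z : ℂ, 0 ≤ z.re → z ≠ 0 → f z ≠ 0 := by
    intro z hre hz0 hfz
    have hL1 : ∑ j, (p j : ℂ) * Complex.exp (-z * x j) = 1 := by
      have h : (1 : ℂ) - ∑ j, (p j : ℂ) * Complex.exp (-z * x j) = 0 := hfz
      linear_combination -h
    rcases lt_or_eq_of_le hre with hpos | hzero
    · -- Re z > 0 : strict contraction
      have hlt : ‖∑ j, (p j : ℂ) * Complex.exp (-z * x j)‖ < 1 := by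
        calc ‖∑ j, (p j : ℂ) * Complex.exp (-z * x j)‖
            ≤ ∑ j, ‖(p j : ℂ) * Complex.exp (-z * x j)‖ := norm_sum_le _ _
          _ = ∑ j, p j * Real.exp (-(z.re * x j)) := by
              apply Finset.sum_congr rfl
              intro j _
              rw [norm_mul, Complex.norm_real, Real.norm_eq_abs,
                abs_of_pos (hp j), Complex.norm_exp]
              congr 2
              simp [Complex.mul_re]
          _ < ∑ j, p j := by
              apply Finset.sum_lt_sum_of_nonempty hA
              intro j _
              have he : Real.exp (-(z.re * x j)) < 1 := by
                apply Real.exp_lt_one_iff.mpr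
                nlinarith [hx j]
              nlinarith [hp j, Real.exp_pos (-(z.re * x j))]
          _ = 1 := hpsum
      rw [hL1] at hlt
      simp at hlt
    · -- Re z = 0 : use non-lattice condition
      have ht0 : z.im ≠ 0 := by
        intro h
        apply hz0
        apply Complex.ext <;> simp [← hzero, h]
      set t := z.im with htdef
      have hcos : ∀ j, Real.cos (t * x j) = 1 := by
        have hre1 : ∑ j, p j * Real.cos (t * x j) = 1 := by
          have h := congrArg Complex.re hL1
          rw [Complex.re_sum, Complex.one_re] at h
          rw [← h]
          apply Finset.sum_congr rfl
          intro j _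
          have hzre : (-z * (x j : ℂ)).re = 0 := by
            simp [Complex.mul_re, ← hzero]
          have hzim : (-z * (x j : ℂ)).im = -(t * x j) := by
            simp [Complex.mul_im, ← hzero, htdef]
          rw [Complex.mul_re, Complex.exp_re, Complex.exp_im, hzre, hzim]
          simp [Real.cos_neg]
        by_contra hc
        push_neg at hc
        obtain ⟨j0, hj0⟩ := hc
        have hlt : ∑ j, p j * Real.cos (t * x j) < ∑ j, p j := by
          apply Finset.sum_lt_sum
          · intro j _
            have := Real.cos_le_one (t * x j)
            nlinarith [hp j]
          · refine ⟨j0, Finset.mem_univ _, ?_⟩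
            have h1 := Real.cos_le_one (t * x j0)
            have h2 : Real.cos (t * x j0) < 1 := lt_of_le_of_ne h1 hj0
            nlinarith [hp j0]
        rw [hre1, hpsum] at hlt
        exact lt_irrefl 1 hlt
      -- so each x j is an integer multiple of 2π/t
      have hmem : ∀ j, x j ∈ AddSubgroup.zmultiples (2 * Real.pi / t) := by
        intro j
        obtain ⟨n, hn⟩ := (Real.cos_eq_one_iff (t * x j)).mp (hcos j)
        exact ⟨n, by simp only [zsmul_eq_mul]; field_simp; linarith [hn]⟩
      have hsub : (AddSubgroup.closure (Set.range x) : AddSubgroup ℝ) ≤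
          AddSubgroup.zmultiples (2 * Real.pi / t) := by
        apply AddSubgroup.closure_le _ |>.mpr
        rintro y ⟨j, rfl⟩
        exact hmem j
      have hdense : Dense ((AddSubgroup.zmultiples (2 * Real.pi / t) : AddSubgroup ℝ) : Set ℝ) :=
        hnl.mono hsub
      set c := 2 * Real.pi / t with hcdef
      have hc0 : c ≠ 0 := by
        apply div_ne_zero _ ht0
        positivity
      have hIoo : (Set.Ioo (0:ℝ) |c|).Nonempty := Set.nonempty_Ioo.mpr (abs_pos.mpr hc0)
      obtain ⟨y, hy, hy2⟩ := hdense.exists_mem_open isOpen_Ioo hIoo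
      obtain ⟨m, hm⟩ := hy
      have hmc : (m : ℝ) * c = y := by rw [← hm]; simp [zsmul_eq_mul]
      obtain ⟨hy2a, hy2b⟩ := hy2
      rcases eq_or_ne m 0 with rfl | hm0
      · rw [← hmc] at hy2a; simp at hy2a
      · have h1 : (1 : ℝ) ≤ |(m : ℝ)| := by
          rw [← Int.cast_abs]
          exact_mod_cast Int.one_le_abs hm0
        have h2 : |c| ≤ |y| := by
          rw [← hmc, abs_mul]
          nlinarith [abs_nonneg c]
        rw [abs_of_pos hy2a] at h2
        linarith
  -- g does not vanish on the closed half plane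
  have hgne : ∀ z : ℂ, 0 ≤ z.re → g z ≠ 0 := by
    intro z hre
    rcases eq_or_ne z 0 with rfl | hz
    · rw [hg0]; exact hσ0
    · intro h0
      exact hfne z hre hz (by rw [hfg z, h0, mul_zero])
  refine ⟨{z : ℂ | g z ≠ 0}, fun z => -w z / ((σ : ℂ) * g z), ?_, ?_, ?_, ?_⟩
  · have : {z : ℂ | g z ≠ 0} = g ⁻¹' {0}ᶜ := rfl
    rw [this]
    exact isOpen_compl_singleton.preimage hgd.continuous
  · exact fun z hz => hgne z hz
  · apply DifferentiableOn.div
    · exact hwd.neg.differentiableOn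
    · exact ((differentiable_const _).mul hgd).differentiableOn
    · intro z hz
      exact mul_ne_zero hσ0 hz
  · intro z hz
    have hz0 : z ≠ 0 := by
      intro h; rw [h] at hz; simp at hz
    have hgz : g z ≠ 0 := hgne z hz.le
    have e1 := hgw z
    have e2 := hfg z
    have hfz : f z ≠ 0 := hfne z hz.le hz0
    rw [show (1 : ℂ) - ∑ j, (p j : ℂ) * Complex.exp (-z * x j) = f z from rfl, e2]
    rw [e2] at hfz
    field_simp
    linear_combination e1
end

section
/- Let λ = Σ_{j∈𝒜} p_j δ_{−log r_j} be a finitely supported probability measure on (0,∞), with 0 < p_j < 1 and 0 < r_j < 1. If log r_j / log r_k is diophantine for some j ≠ k (i.e., there exist c > 0, l > 2 with |log r_j/log r_k − p/q| ≥ c/q^l for all integers p and positive integers q), then λ is weakly diophantine: there exists l' > 0 such that liminf_{|b|→∞} |b|^{l'} |1 − ℒλ(ib)| > 0. -/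
open Real

lemma aux_cos (x : ℝ) :
    2 / Real.pi ^ 2 * (x - 2 * Real.pi * (round (x / (2 * Real.pi)) : ℤ)) ^ 2
      ≤ 1 - Real.cos x := by
  have hpi := Real.pi_pos
  set m : ℤ := round (x / (2 * Real.pi)) with hm
  have h1 : |x / (2 * Real.pi) - m| ≤ 1 / 2 := abs_sub_round _
  have h2 : x - 2 * Real.pi * m = (2 * Real.pi) * (x / (2 * Real.pi) - m) := by
    field_simp
  have hy : |x - 2 * Real.pi * m| ≤ Real.pi := by
    rw [h2, abs_mul, abs_of_pos (by positivity)]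
    nlinarith [abs_nonneg (x / (2 * Real.pi) - (m : ℝ))]
  have hc : Real.cos (x - 2 * Real.pi * m) = Real.cos x := by
    have h3 : x - 2 * Real.pi * m = x + (-m : ℤ) * (2 * Real.pi) := by push_cast; ring
    rw [h3, Real.cos_add_int_mul_two_pi]
  have := Real.cos_le_one_sub_mul_cos_sq hy
  rw [hc] at this; linarith

set_option maxHeartbeats 1000000 in
/-- if `λ = Σ_j p_j δ_{−log r_j}` and `log r_j / log r_k` is
diophantine for some `j ≠ k`, then `λ` is weakly diophantine: there is `l' > 0`
with `liminf_{|b|→∞} |b|^{l'} |1 − ℒλ(ib)| > 0`, where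
`ℒλ(ib) = Σ_i p_i e^{-ib(−log r_i)}`. -/
theorem stmt10 {A : Type*} [Fintype A] (r p : A → ℝ)
    (hr : ∀ i, 0 < r i ∧ r i < 1) (hp : ∀ i, 0 < p i ∧ p i < 1)
    (hpsum : ∑ i, p i = 1)
    (j k : A) (hjk : j ≠ k)
    (c l : ℝ) (hc : 0 < c) (hl : 2 < l)
    (hdio : ∀ (a : ℤ) (q : ℕ), 0 < q →
      c / (q : ℝ) ^ l ≤ |Real.log (r j) / Real.log (r k) - (a : ℝ) / (q : ℝ)|) :
    ∃ l' > (0 : ℝ), ∃ ε > (0 : ℝ), ∃ B : ℝ, ∀ b : ℝ, B ≤ |b| →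
      ε ≤ |b| ^ l' *
        ‖1 - ∑ i, (p i : ℂ) * Complex.exp (-(Complex.I * b) * (-Real.log (r i)))‖ := by
  classical
  have hπ := Real.pi_pos
  have hπ3 := Real.pi_gt_three
  set α := Real.log (r j) with hαdef
  set β := Real.log (r k) with hβdef
  have hα : α < 0 := Real.log_neg (hr j).1 (hr j).2
  have hβ : β < 0 := Real.log_neg (hr k).1 (hr k).2
  have hβ' : 0 < |β| := abs_pos.2 hβ.ne
  set K : ℝ := |α| + |β| + π with hKdef
  have hK1 : 1 < K := by nlinarith [abs_nonneg α, abs_nonneg β]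
  have hKpos : 0 < K := by linarith
  have hKl : 0 < K ^ l := Real.rpow_pos_of_pos hKpos l
  set ε0 : ℝ := c * |β| / (2 * K ^ l) with hε0def
  have hε0 : 0 < ε0 := by positivity
  set pm : ℝ := min (p j) (p k) with hpmdef
  have hpm : 0 < pm := lt_min (hp j).1 (hp k).1
  refine ⟨2 * l - 2, by linarith, pm * (2 / π ^ 2) * ε0 ^ 2, by positivity,
    max 1 ((π + 1) / |β|), ?_⟩
  intro b hb
  have ht1 : 1 ≤ |b| := le_trans (le_max_left _ _) hb
  have ht0 : 0 < |b| := by linarith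
  have hb0 : b ≠ 0 := abs_pos.mp ht0
  have htβ : π + 1 ≤ |b| * |β| := by
    have h2 : (π + 1) / |β| ≤ |b| := le_trans (le_max_right _ _) hb
    rw [div_le_iff₀ hβ'] at h2; linarith
  set m : ℤ := round (b * α / (2 * π)) with hmdef
  set n : ℤ := round (b * β / (2 * π)) with hndef
  set y1 : ℝ := b * α - 2 * π * m with hy1def
  set y2 : ℝ := b * β - 2 * π * n with hy2def
  have haux1 : 2 / π ^ 2 * y1 ^ 2 ≤ 1 - Real.cos (b * α) := by
    rw [hy1def, hmdef]; exact aux_cos _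
  have haux2 : 2 / π ^ 2 * y2 ^ 2 ≤ 1 - Real.cos (b * β) := by
    rw [hy2def, hndef]; exact aux_cos _
  have hy1π : |y1| ≤ π := by
    have h1 : |b * α / (2 * π) - (m : ℝ)| ≤ 1 / 2 := by rw [hmdef]; exact abs_sub_round _
    have h2 : y1 = (2 * π) * (b * α / (2 * π) - m) := by rw [hy1def]; field_simp
    rw [h2, abs_mul, abs_of_pos (by positivity)]
    nlinarith [abs_nonneg (b * α / (2 * π) - (m : ℝ))]
  have hy2π : |y2| ≤ π := by
    have h1 : |b * β / (2 * π) - (n : ℝ)| ≤ 1 / 2 := by rw [hndef]; exact abs_sub_round _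
    have h2 : y2 = (2 * π) * (b * β / (2 * π) - n) := by rw [hy2def]; field_simp
    rw [h2, abs_mul, abs_of_pos (by positivity)]
    nlinarith [abs_nonneg (b * β / (2 * π) - (n : ℝ))]
  have hn0 : n ≠ 0 := by
    intro h
    have h1 : y2 = b * β := by rw [hy2def, h]; push_cast; ring
    have h2 : |y2| = |b| * |β| := by rw [h1, abs_mul]
    rw [h2] at hy2π; linarith
  have hn0' : ((n : ℝ)) ≠ 0 := Int.cast_ne_zero.2 hn0
  have hn1 : (1 : ℝ) ≤ |(n : ℝ)| := by
    have := Int.one_le_abs hn0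
    rw [← Int.cast_abs]; exact_mod_cast this
  -- bounds on |n|, |m|
  have habs_tri : ∀ u v : ℝ, |u - v| ≤ |u| + |v| := by
    intro u v
    calc |u - v| = |u + (-v)| := by rw [sub_eq_add_neg]
      _ ≤ |u| + |(-v)| := abs_add_le _ _
      _ = |u| + |v| := by rw [abs_neg]
  have hnK : |(n : ℝ)| ≤ K * |b| := by
    have hA : 2 * π * |(n : ℝ)| ≤ |b| * (|β| + π) := by
      have h1 : (2 * π) * (n : ℝ) = b * β - y2 := by rw [hy2def]; ring
      have h2 : (2 * π) * |(n : ℝ)| = |b * β - y2| := by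
        rw [← h1, abs_mul, abs_of_pos (show (0:ℝ) < 2 * π by positivity)]
      rw [h2]
      calc |b * β - y2| ≤ |b * β| + |y2| := habs_tri _ _
        _ ≤ |b| * |β| + π := by rw [abs_mul]; linarith
        _ ≤ |b| * (|β| + π) := by nlinarith [mul_le_mul_of_nonneg_left ht1 hπ.le]
    have h8 : |β| + π ≤ 2 * π * K := by
      nlinarith [mul_nonneg (by linarith : (0:ℝ) ≤ 2 * π - 1) hKpos.le, abs_nonneg α]
    have h7 : |b| * (|β| + π) ≤ 2 * π * (K * |b|) := by
      calc |b| * (|β| + π) ≤ |b| * (2 * π * K) := mul_le_mul_of_nonneg_left h8 (abs_nonneg b)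
        _ = 2 * π * (K * |b|) := by ring
    exact le_of_mul_le_mul_left (le_trans hA h7) (by positivity)
  have hmK : |(m : ℝ)| ≤ K * |b| := by
    have hA : 2 * π * |(m : ℝ)| ≤ |b| * (|α| + π) := by
      have h1 : (2 * π) * (m : ℝ) = b * α - y1 := by rw [hy1def]; ring
      have h2 : (2 * π) * |(m : ℝ)| = |b * α - y1| := by
        rw [← h1, abs_mul, abs_of_pos (show (0:ℝ) < 2 * π by positivity)]
      rw [h2]
      calc |b * α - y1| ≤ |b * α| + |y1| := habs_tri _ _
        _ ≤ |b| * |α| + π := by rw [abs_mul]; linarith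
        _ ≤ |b| * (|α| + π) := by nlinarith [mul_le_mul_of_nonneg_left ht1 hπ.le]
    have h8 : |α| + π ≤ 2 * π * K := by
      nlinarith [mul_nonneg (by linarith : (0:ℝ) ≤ 2 * π - 1) hKpos.le, abs_nonneg β]
    have h7 : |b| * (|α| + π) ≤ 2 * π * (K * |b|) := by
      calc |b| * (|α| + π) ≤ |b| * (2 * π * K) := mul_le_mul_of_nonneg_left h8 (abs_nonneg b)
        _ = 2 * π * (K * |b|) := by ring
    exact le_of_mul_le_mul_left (le_trans hA h7) (by positivity)
  -- diophantine input
  have hq0 : 0 < n.natAbs := Int.natAbs_pos.2 hn0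
  have hQcast : ((n.natAbs : ℕ) : ℝ) = |(n : ℝ)| := by
    rw [Nat.cast_natAbs, Int.cast_abs]
  have hacast : (((if 0 < n then m else -m) : ℤ) : ℝ) / ((n.natAbs : ℕ) : ℝ)
      = (m : ℝ) / (n : ℝ) := by
    rcases lt_trichotomy n 0 with h | h | h
    · rw [if_neg (by omega), hQcast, abs_of_neg (by exact_mod_cast h)]
      push_cast; rw [neg_div_neg_eq]
    · exact absurd h hn0
    · rw [if_pos h, hQcast, abs_of_pos (by exact_mod_cast h)]
  have hd := hdio (if 0 < n then m else -m) n.natAbs hq0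
  rw [hacast] at hd
  set Q : ℝ := ((n.natAbs : ℕ) : ℝ) with hQdef
  have hQpos : 0 < Q := by rw [hQcast]; linarith
  have hkey : α / β - (m : ℝ) / (n : ℝ) = (y1 * n - y2 * m) / (b * β * n) := by
    rw [hy1def, hy2def]; field_simp [hb0, hβ.ne, hn0']; ring
  have habskey : |α / β - (m : ℝ) / (n : ℝ)|
      = |y1 * n - y2 * m| / (|b| * |β| * |(n : ℝ)|) := by
    rw [hkey, abs_div, abs_mul, abs_mul]
  rw [habskey] at hd
  set M : ℝ := max |y1| |y2| with hMdef
  have hM1 : |y1| ≤ M := le_max_left _ _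
  have hM2 : |y2| ≤ M := le_max_right _ _
  have hM0 : 0 ≤ M := le_trans (abs_nonneg _) hM1
  have hnum : |y1 * n - y2 * m| ≤ 2 * K * M * |b| := by
    calc |y1 * n - y2 * m| ≤ |y1 * n| + |y2 * m| := habs_tri _ _
      _ = |y1| * |(n : ℝ)| + |y2| * |(m : ℝ)| := by rw [abs_mul, abs_mul]
      _ ≤ M * (K * |b|) + M * (K * |b|) := by
          refine add_le_add (mul_le_mul hM1 hnK (abs_nonneg _) hM0)
            (mul_le_mul hM2 hmK (abs_nonneg _) hM0)
      _ = 2 * K * M * |b| := by ring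
  have hQl : 0 < Q ^ l := Real.rpow_pos_of_pos hQpos _
  have hmain : c / Q ^ l * (|b| * |β| * |(n : ℝ)|) ≤ 2 * K * M * |b| := by
    have h1 : c / Q ^ l * (|b| * |β| * |(n : ℝ)|) ≤ |y1 * n - y2 * m| := by
      rw [← le_div_iff₀ (by positivity)]; exact hd
    exact le_trans h1 hnum
  -- translate to M * |b|^(l-1) ≥ ε0
  have hP1 : 0 < Q ^ (l - 1) := Real.rpow_pos_of_pos hQpos _
  have hPt : 0 < |b| ^ (l - 1) := Real.rpow_pos_of_pos ht0 _
  have hPK : 0 < K ^ (l - 1) := Real.rpow_pos_of_pos hKpos _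
  have hQsplit : Q ^ l = Q * Q ^ (l - 1) := by
    rw [show l = 1 + (l - 1) by ring, Real.rpow_add hQpos, Real.rpow_one]
    ring_nf
  have hKsplit : K ^ l = K * K ^ (l - 1) := by
    rw [show l = 1 + (l - 1) by ring, Real.rpow_add hKpos, Real.rpow_one]
    ring_nf
  have hQKt : Q ≤ K * |b| := by rw [hQcast]; exact hnK
  have hmono : Q ^ (l - 1) ≤ K ^ (l - 1) * |b| ^ (l - 1) := by
    rw [← Real.mul_rpow hKpos.le (abs_nonneg b)]
    exact Real.rpow_le_rpow hQpos.le hQKt (by linarith)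
  have hQn : |(n : ℝ)| = Q := by rw [hQcast]
  have hmain' : c * |β| * |b| / Q ^ (l - 1) ≤ (2 * K * M) * |b| := by
    have h1 : c / Q ^ l * (|b| * |β| * Q) = c * |β| * |b| / Q ^ (l - 1) := by
      rw [hQsplit]; field_simp
    rw [hQn, h1] at hmain; linarith
  have h5 : c * |β| / Q ^ (l - 1) ≤ 2 * K * M := by
    have h' : (c * |β| / Q ^ (l - 1)) * |b| ≤ (2 * K * M) * |b| := by
      calc (c * |β| / Q ^ (l - 1)) * |b| = c * |β| * |b| / Q ^ (l - 1) := by ring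
        _ ≤ (2 * K * M) * |b| := hmain'
    exact le_of_mul_le_mul_right h' ht0
  have h6 : c * |β| ≤ 2 * K * M * Q ^ (l - 1) := by
    rw [div_le_iff₀ hP1] at h5; linarith
  have hstepB : ε0 ≤ M * |b| ^ (l - 1) := by
    rw [hε0def, hKsplit, div_le_iff₀ (by positivity)]
    have h2KM : (0:ℝ) ≤ 2 * K * M := mul_nonneg (mul_nonneg (by norm_num) hKpos.le) hM0
    have h9 : 2 * K * M * Q ^ (l - 1) ≤ 2 * K * M * (K ^ (l - 1) * |b| ^ (l - 1)) :=
      mul_le_mul_of_nonneg_left hmono h2KM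
    calc c * |β| ≤ 2 * K * M * (K ^ (l - 1) * |b| ^ (l - 1)) := le_trans h6 h9
      _ = M * |b| ^ (l - 1) * (2 * (K * K ^ (l - 1))) := by ring
  -- lower bound on the norm via real part
  have hreS : (1 - ∑ i, (p i : ℂ) * Complex.exp (-(Complex.I * b) * (-Real.log (r i)))).re
      = ∑ i, p i * (1 - Real.cos (b * Real.log (r i))) := by
    have hS : ∀ i : A, (p i : ℂ) * Complex.exp (-(Complex.I * b) * (-Real.log (r i)))
        = (p i : ℂ) * Complex.exp ((b * Real.log (r i) : ℝ) * Complex.I) := by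
      intro i; congr 2; push_cast; ring
    rw [Finset.sum_congr rfl fun i _ => hS i, Complex.sub_re, Complex.one_re,
      Complex.re_sum]
    have h2 : ∀ i ∈ Finset.univ, ((p i : ℂ) * Complex.exp ((b * Real.log (r i) : ℝ) * Complex.I)).re
        = p i * Real.cos (b * Real.log (r i)) := by
      intro i _
      rw [Complex.re_ofReal_mul, Complex.exp_ofReal_mul_I_re]
    rw [Finset.sum_congr rfl h2]
    have h3 : ∑ i, p i * (1 - Real.cos (b * Real.log (r i)))
        = (∑ i, p i) - ∑ i, p i * Real.cos (b * Real.log (r i)) := by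
      rw [← Finset.sum_sub_distrib]
      exact Finset.sum_congr rfl fun i _ => by ring
    rw [h3, hpsum]
  have hrele : (1 - ∑ i, (p i : ℂ) * Complex.exp (-(Complex.I * b) * (-Real.log (r i)))).re
      ≤ ‖1 - ∑ i, (p i : ℂ) * Complex.exp (-(Complex.I * b) * (-Real.log (r i)))‖ := by
    exact Complex.re_le_norm _
  rw [hreS] at hrele
  have hpair : p j * (1 - Real.cos (b * α)) + p k * (1 - Real.cos (b * β))
      ≤ ∑ i, p i * (1 - Real.cos (b * Real.log (r i))) := by
    have hpairsum : ∑ i ∈ ({j, k} : Finset A), p i * (1 - Real.cos (b * Real.log (r i)))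
        = p j * (1 - Real.cos (b * Real.log (r j))) + p k * (1 - Real.cos (b * Real.log (r k))) :=
      Finset.sum_pair hjk
    rw [hαdef, hβdef, ← hpairsum]
    refine Finset.sum_le_sum_of_subset_of_nonneg (Finset.subset_univ _) ?_
    intro i _ _
    exact mul_nonneg (hp i).1.le
      (by linarith [Real.cos_le_one (b * Real.log (r i))])
  have hMsq : M ^ 2 ≤ y1 ^ 2 + y2 ^ 2 := by
    rcases le_total |y1| |y2| with h | h
    · have hM : M = |y2| := max_eq_right h
      rw [hM, sq_abs]; linarith [sq_nonneg y1]
    · have hM : M = |y1| := max_eq_left h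
      rw [hM, sq_abs]; linarith [sq_nonneg y2]
  have c1 : pm * (2 / π ^ 2) * M ^ 2 ≤ pm * (2 / π ^ 2) * (y1 ^ 2 + y2 ^ 2) :=
    mul_le_mul_of_nonneg_left hMsq (mul_nonneg hpm.le (by positivity))
  have c3 : pm * (2 / π ^ 2 * y1 ^ 2) ≤ p j * (1 - Real.cos (b * α)) := by
    calc pm * (2 / π ^ 2 * y1 ^ 2) ≤ p j * (2 / π ^ 2 * y1 ^ 2) :=
          mul_le_mul_of_nonneg_right (min_le_left _ _) (by positivity)
      _ ≤ p j * (1 - Real.cos (b * α)) :=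
          mul_le_mul_of_nonneg_left haux1 (hp j).1.le
  have c4 : pm * (2 / π ^ 2 * y2 ^ 2) ≤ p k * (1 - Real.cos (b * β)) := by
    calc pm * (2 / π ^ 2 * y2 ^ 2) ≤ p k * (2 / π ^ 2 * y2 ^ 2) :=
          mul_le_mul_of_nonneg_right (min_le_right _ _) (by positivity)
      _ ≤ p k * (1 - Real.cos (b * β)) :=
          mul_le_mul_of_nonneg_left haux2 (hp k).1.le
  have hN : pm * (2 / π ^ 2) * M ^ 2
      ≤ ‖1 - ∑ i, (p i : ℂ) * Complex.exp (-(Complex.I * b) * (-Real.log (r i)))‖ := by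
    have c2 : pm * (2 / π ^ 2) * (y1 ^ 2 + y2 ^ 2)
        = pm * (2 / π ^ 2 * y1 ^ 2) + pm * (2 / π ^ 2 * y2 ^ 2) := by ring
    linarith [c1, c2, c3, c4, hpair, hrele]
  -- assemble
  have hfin : |b| ^ (2 * l - 2) = (|b| ^ (l - 1)) ^ 2 := by
    rw [show (2 * l - 2) = (l - 1) * 2 by ring, Real.rpow_mul (abs_nonneg b),
      show ((2 : ℝ)) = ((2 : ℕ) : ℝ) by norm_num, Real.rpow_natCast]
  rw [hfin]
  have hsq : ε0 ^ 2 ≤ (M * |b| ^ (l - 1)) ^ 2 := pow_le_pow_left₀ hε0.le hstepB 2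
  calc pm * (2 / π ^ 2) * ε0 ^ 2 ≤ pm * (2 / π ^ 2) * (M * |b| ^ (l - 1)) ^ 2 :=
        mul_le_mul_of_nonneg_left hsq (mul_nonneg hpm.le (by positivity))
    _ = (|b| ^ (l - 1)) ^ 2 * (pm * (2 / π ^ 2) * M ^ 2) := by ring
    _ ≤ (|b| ^ (l - 1)) ^ 2 *
        ‖1 - ∑ i, (p i : ℂ) * Complex.exp (-(Complex.I * b) * (-Real.log (r i)))‖ :=
        mul_le_mul_of_nonneg_left hN (by positivity)
end

section
/- Let X_1, X_2, … be i.i.d. random variables with common law λ, a finitely supported probability measure on (0,∞), and S_n = X_1 + ⋯ + X_n. Define the renewal operator Rf(t) = Σ_{n≥0} E[f(S_n − t)] for non-negative bounded Borel f. Then there exists a constant C (depending on λ) such that for all s ≥ 1 and all t ∈ ℝ, R(1_{[0,s]})(t) ≤ C·max{1, s}. -/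
open MeasureTheory
open scoped ENNReal

noncomputable def walkLaw (lam : Measure ℝ) (n : ℕ) : Measure ℝ :=
  Measure.map (fun v : Fin n → ℝ => ∑ i, v i) (Measure.pi fun _ : Fin n => lam)

section aux

/-- counting lemma: a δ-increasing sequence visits a window of length s at most
`⌊s/δ⌋+1` times among indices `< N`. -/
lemma count_aux {δ s t : ℝ} (hδ : 0 < δ) (N : ℕ) (q : ℕ → ℝ)
    (hq : ∀ m n : ℕ, m ≤ n → n ≤ N → q m + (n - m : ℕ) * δ ≤ q n) :
    ((Finset.range N).filter (fun n => q n ∈ Set.Icc t (t + s))).card ≤ ⌊s / δ⌋₊ + 1 := by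
  set T := (Finset.range N).filter (fun n => q n ∈ Set.Icc t (t + s)) with hT
  rcases T.eq_empty_or_nonempty with h | h
  · simp [h]
  · set m := T.min' h with hm
    have hmT : m ∈ T := T.min'_mem h
    have hsub : T ⊆ Finset.Icc m (m + ⌊s / δ⌋₊) := by
      intro n hn
      have hmn : m ≤ n := T.min'_le n hn
      have hnN : n < N := Finset.mem_range.mp (Finset.mem_filter.mp hn).1
      have h1 := hq m n hmn hnN.le
      have h2 : q n ≤ t + s := ((Finset.mem_filter.mp hn).2).2
      have h3 : t ≤ q m := ((Finset.mem_filter.mp hmT).2).1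
      have h4 : ((n - m : ℕ) : ℝ) * δ ≤ s := by linarith
      have h5 : ((n - m : ℕ) : ℝ) ≤ s / δ := by
        rw [le_div_iff₀ hδ]; exact h4
      have h6 : n - m ≤ ⌊s / δ⌋₊ := Nat.le_floor h5
      exact Finset.mem_Icc.mpr ⟨hmn, by omega⟩
    calc T.card ≤ (Finset.Icc m (m + ⌊s / δ⌋₊)).card := Finset.card_le_card hsub
      _ = ⌊s / δ⌋₊ + 1 := by rw [Nat.card_Icc]; omega

end aux

/-- for a finitely supported probability measure `lam` on `(0,∞)`
there is `C > 0` such that the renewal operator applied to `1_{[0,s]}`, namely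
`R(1_{[0,s]})(t) = Σ_{n≥0} P(S_n − t ∈ [0,s])`, is at most `C·max{1,s}` for all
`s ≥ 1` and all `t ∈ ℝ`. -/
theorem stmt12 (lam : Measure ℝ) [IsProbabilityMeasure lam]
    (S : Finset ℝ) (hS : ∀ y ∈ S, 0 < y) (hsupp : lam ((S : Set ℝ))ᶜ = 0) :
    ∃ C > (0 : ℝ), ∀ s : ℝ, 1 ≤ s → ∀ t : ℝ,
      (∑' n : ℕ, walkLaw lam n (Set.Icc t (t + s))) ≤
        ENNReal.ofReal (C * max 1 s) := by
  -- S is nonempty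
  have hSne : S.Nonempty := by
    by_contra h
    rw [Finset.not_nonempty_iff_eq_empty] at h
    subst h
    simp only [Finset.coe_empty, Set.compl_empty] at hsupp
    exact (one_ne_zero (measure_univ (μ := lam) ▸ hsupp)).elim
  set δ := S.min' hSne with hδdef
  have hδ : 0 < δ := hS _ (S.min'_mem hSne)
  refine ⟨1 / δ + 1, by positivity, fun s hs t => ?_⟩
  have hmax : max 1 s = s := max_eq_right hs
  -- reduce to partial sums
  rw [ENNReal.tsum_eq_iSup_sum' (fun N => Finset.range N) (fun t => ⟨t.sup id + 1, fun n hn =>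
    Finset.mem_range.mpr (Nat.lt_succ_of_le (Finset.le_sup (f := id) hn))⟩)]
  refine iSup_le fun N => ?_
  -- the ambient space
  set μ : Measure (Fin N → ℝ) := Measure.pi (fun _ : Fin N => lam) with hμ
  -- partial sums
  set P : ℕ → (Fin N → ℝ) → ℝ :=
    fun n v => ∑ i ∈ Finset.univ.filter (fun i : Fin N => (i : ℕ) < n), v i with hP
  have hPmeas : ∀ n, Measurable (P n) := fun n =>
    Finset.measurable_sum _ (fun i _ => measurable_pi_apply i)
  -- marginal identity
  have hmarg : ∀ n, n ≤ N → walkLaw lam n (Set.Icc t (t + s))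
      = μ {v | P n v ∈ Set.Icc t (t + s)} := by
    intro n hn
    have p : Fin N → Prop := fun i => (i : ℕ) < n
    classical
    let e : Fin n ≃ {i : Fin N // (i : ℕ) < n} :=
      { toFun := fun i => ⟨⟨i.1, lt_of_lt_of_le i.2 hn⟩, i.2⟩
        invFun := fun j => ⟨j.1.1, j.2⟩
        left_inv := fun i => rfl
        right_inv := fun j => rfl }
    have h1 := measurePreserving_piEquivPiSubtypeProd (fun _ : Fin N => lam)
      (fun i : Fin N => (i : ℕ) < n)
    have h2 : MeasurePreserving (Prod.fst :
        ({i : Fin N // (i : ℕ) < n} → ℝ) × ({i : Fin N // ¬ (i : ℕ) < n} → ℝ) →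
          ({i : Fin N // (i : ℕ) < n} → ℝ))
        ((Measure.pi fun _ : {i : Fin N // (i : ℕ) < n} => lam).prod
          (Measure.pi fun _ : {i : Fin N // ¬ (i : ℕ) < n} => lam))
        (Measure.pi fun _ : {i : Fin N // (i : ℕ) < n} => lam) :=
      ⟨measurable_fst, by simp [Measure.map_fst_prod]⟩
    have h3 : MeasurePreserving
        ((MeasurableEquiv.piCongrLeft (fun _ => ℝ) e).symm)
        (Measure.pi fun _ : {i : Fin N // (i : ℕ) < n} => lam)
        (Measure.pi fun _ : Fin n => lam) :=
      (measurePreserving_piCongrLeft (fun _ : {i : Fin N // (i : ℕ) < n} => lam) e).symm _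
    have hcomp := (h3.comp h2).comp h1
    have hfun : (((MeasurableEquiv.piCongrLeft (fun _ => ℝ) e).symm ∘ Prod.fst) ∘
        (MeasurableEquiv.piEquivPiSubtypeProd (fun _ : Fin N => ℝ)
          (fun i : Fin N => (i : ℕ) < n)))
        = fun v : Fin N → ℝ => fun i : Fin n => v ⟨i.1, lt_of_lt_of_le i.2 hn⟩ := by
      funext v
      rfl
    rw [hfun] at hcomp
    have hsum : ∀ v : Fin N → ℝ,
        (∑ i : Fin n, v ⟨i.1, lt_of_lt_of_le i.2 hn⟩) = P n v := by
      intro v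
      refine Finset.sum_bij' (fun i _ => (⟨i.1, lt_of_lt_of_le i.2 hn⟩ : Fin N))
        (fun j hj => ⟨j.1, (Finset.mem_filter.mp hj).2⟩) ?_ ?_ ?_ ?_ ?_
      · intro i _; exact Finset.mem_filter.mpr ⟨Finset.mem_univ _, i.2⟩
      · intro j hj; exact Finset.mem_univ _
      · intro i _; rfl
      · intro j hj; rfl
      · intro i _; rfl
    have hIcc : MeasurableSet (Set.Icc t (t + s)) := measurableSet_Icc
    rw [walkLaw, Measure.map_apply (by fun_prop) hIcc]
    have := hcomp.measure_preimage (s := (fun v : Fin n → ℝ => ∑ i, v i) ⁻¹' Set.Icc t (t + s))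
      ((by fun_prop : Measurable (fun v : Fin n → ℝ => ∑ i, v i)) hIcc).nullMeasurableSet
    rw [← this]
    congr 1
    ext v
    simp only [Set.mem_preimage, Set.mem_setOf_eq, hsum v]
  -- a.e. all coordinates in S
  have hae : ∀ᵐ v ∂μ, ∀ i : Fin N, v i ∈ (S : Set ℝ) := by
    rw [MeasureTheory.ae_all_iff]
    intro i
    have h0 : μ ((fun v : Fin N → ℝ => v i) ⁻¹' ((S : Set ℝ))ᶜ) = 0 :=
      Measure.pi_eval_preimage_null (μ := fun _ : Fin N => lam) hsupp
    rw [ae_iff]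
    exact h0
  -- monotone growth of partial sums on good points
  have hgrow : ∀ v : Fin N → ℝ, (∀ i : Fin N, v i ∈ (S : Set ℝ)) →
      ∀ m n : ℕ, m ≤ n → n ≤ N → P m v + (n - m : ℕ) * δ ≤ P n v := by
    intro v hv m n hmn hnN
    obtain ⟨k, rfl⟩ := Nat.exists_eq_add_of_le hmn
    induction k with
    | zero => simp
    | succ k ih =>
      have hk : m + k ≤ N := by omega
      have ihk := ih (by omega) (by omega)
      have hstep : P (m + k) v + δ ≤ P (m + k + 1) v := by
        have hkN : m + k < N := by omega
        have hins : Finset.univ.filter (fun i : Fin N => (i : ℕ) < m + k + 1)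
            = insert (⟨m + k, hkN⟩ : Fin N)
              (Finset.univ.filter (fun i : Fin N => (i : ℕ) < m + k)) := by
          ext i
          simp only [Finset.mem_filter, Finset.mem_univ, true_and, Finset.mem_insert,
            Fin.ext_iff]
          omega
        have hnotmem : (⟨m + k, hkN⟩ : Fin N) ∉
            Finset.univ.filter (fun i : Fin N => (i : ℕ) < m + k) := by
          simp
        have hδle : δ ≤ v ⟨m + k, hkN⟩ := S.min'_le _ (hv _)
        simp only [hP, hins, Finset.sum_insert hnotmem]
        linarith
      have hc : ((m + (k + 1) - m : ℕ) : ℝ) = ((m + k - m : ℕ) : ℝ) + 1 := by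
        have h9 : m + (k + 1) - m = (m + k - m) + 1 := by omega
        rw [h9]; push_cast; ring
      have hPe : P (m + (k + 1)) v = P (m + k + 1) v := by norm_num [Nat.add_assoc]
      rw [hc, hPe]
      linarith
  -- bound the finite sum
  set K : ℕ := ⌊s / δ⌋₊ + 1 with hK
  have key : ∑ n ∈ Finset.range N, walkLaw lam n (Set.Icc t (t + s)) ≤ (K : ℝ≥0∞) := by
    have heq : ∑ n ∈ Finset.range N, walkLaw lam n (Set.Icc t (t + s))
        = ∑ n ∈ Finset.range N, μ {v | P n v ∈ Set.Icc t (t + s)} := by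
      refine Finset.sum_congr rfl fun n hn => ?_
      exact hmarg n (Finset.mem_range.mp hn).le
    rw [heq]
    have hmeasA : ∀ n, MeasurableSet {v : Fin N → ℝ | P n v ∈ Set.Icc t (t + s)} :=
      fun n => (hPmeas n) measurableSet_Icc
    calc ∑ n ∈ Finset.range N, μ {v | P n v ∈ Set.Icc t (t + s)}
        = ∫⁻ v, ∑ n ∈ Finset.range N,
            Set.indicator {v | P n v ∈ Set.Icc t (t + s)} (1 : (Fin N → ℝ) → ℝ≥0∞) v ∂μ := by
          rw [lintegral_finset_sum _ (fun n _ => (measurable_one.indicator (hmeasA n)))]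
          refine Finset.sum_congr rfl fun n _ => ?_
          exact (lintegral_indicator_one (hmeasA n)).symm
      _ ≤ ∫⁻ _, (K : ℝ≥0∞) ∂μ := by
          refine lintegral_mono_ae ?_
          filter_upwards [hae] with v hv
          have heq2 : ∑ n ∈ Finset.range N,
              Set.indicator {v | P n v ∈ Set.Icc t (t + s)} (1 : (Fin N → ℝ) → ℝ≥0∞) v
              = (((Finset.range N).filter (fun n => P n v ∈ Set.Icc t (t + s))).card : ℝ≥0∞) := by
            classical
            rw [Finset.card_filter]
            push_cast
            refine Finset.sum_congr rfl fun n _ => ?_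
            simp [Set.indicator_apply]
          rw [heq2]
          have hcard := count_aux (s := s) (t := t) hδ N (fun n => P n v) (hgrow v hv)
          exact Nat.cast_le.mpr hcard
      _ = (K : ℝ≥0∞) := by simp
  refine key.trans ?_
  -- final numeric bound
  rw [hmax]
  have h1 : (K : ℝ) ≤ (1 / δ + 1) * s := by
    have h2 : (⌊s / δ⌋₊ : ℝ) ≤ s / δ := Nat.floor_le (by positivity)
    have : (K : ℝ) = (⌊s / δ⌋₊ : ℝ) + 1 := by push_cast [hK]; ring
    rw [this]
    have : (1 / δ + 1) * s = s / δ + s := by field_simp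
    rw [this]
    linarith
  calc (K : ℝ≥0∞) = ENNReal.ofReal (K : ℝ) := by
        rw [ENNReal.ofReal_natCast]
    _ ≤ ENNReal.ofReal ((1 / δ + 1) * s) := ENNReal.ofReal_le_ofReal h1
end
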